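/- arXiv:1610.03357 — 2 statements merged into one kernel-verified Lean document; each statement's English description precedes it below -/
import Mathlib

section
/- Let i,j,k ∈ {1,...,n+1} be pairwise distinct. Then in 𝒟_{ℂ^n}[s_1,...,s_{n+1}]: s_j Ũ_{i,k} − s_i Ũ_{j,k} = −l_i U_{i,j} Ũ_{j,k} + l_k U_{j,k} Ũ_{i,j} − U_{j,k}(l_k) s_k Ũ_{i,j} − Ũ_{i,k}. -/
open MvPolynomial

/-- The ring `ℂ[x₁,…,xₙ,s₁,…,s_{n+1}]`; `Sum.inl i` is `xᵢ`, `Sum.inr j` is `sⱼ`. -/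
abbrev P2 (n : ℕ) := MvPolynomial (Fin n ⊕ Fin (n + 1)) ℂ

/-- The ring `𝒟_{ℂⁿ}[s₁,…,s_{n+1}]` of differential operators with polynomial
coefficients is realized faithfully by its action on `ℂ[x,s]` :
multiplication by a polynomial. -/
noncomputable def M {n : ℕ} (q : P2 n) : Module.End ℂ (P2 n) := LinearMap.mulLeft ℂ q

/-- A linear form on `ℂⁿ` (with coefficient vector `c`) as a polynomial. -/
noncomputable def lfp {n : ℕ} (c : Fin n → ℂ) : P2 n := ∑ m, C (c m) * X (Sum.inl m)

/-- The variable `sⱼ` as a polynomial. -/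
noncomputable def sp {n : ℕ} (j : Fin (n + 1)) : P2 n := X (Sum.inr j)

/-- The constant vector field `u` as a differential operator (a derivation in the
`x`-variables only). -/
noncomputable def Dv {n : ℕ} (u : Fin n → ℂ) : Module.End ℂ (P2 n) :=
  (mkDerivation ℂ (fun v => Sum.casesOn v (fun m => (C (u m) : P2 n)) fun _ => 0) :
    Derivation ℂ (P2 n) (P2 n))

/-- The value `U(l)` of a constant vector field `u` on the linear form with
coefficient vector `c`. -/
noncomputable def ap {n : ℕ} (u c : Fin n → ℂ) : ℂ := ∑ m, u m * c m

/-- A family of linear forms is generic if every subfamily of `n` of them is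
linearly independent. -/
def Generic {n p : ℕ} (l : Fin p → Fin n → ℂ) : Prop :=
  ∀ S : Finset (Fin p), S.card = n → LinearIndependent ℂ (fun i : S => l i.1)

/-- The operator `Ũ_{i,j} = lᵢ lⱼ U_{i,j} − lⱼ sᵢ − U_{i,j}(lⱼ) lᵢ sⱼ`. -/
noncomputable def Ut {n : ℕ} (l : Fin (n + 1) → Fin n → ℂ)
    (u : Fin (n + 1) → Fin (n + 1) → Fin n → ℂ) (i j : Fin (n + 1)) :
    Module.End ℂ (P2 n) :=
  M (lfp (l i)) * M (lfp (l j)) * Dv (u i j) - M (lfp (l j)) * M (sp i) -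
    ap (u i j) (l j) • (M (lfp (l i)) * M (sp j))

/-- The operator `Ẽ = E − s₁ − ⋯ − s_{n+1}`, `E` being the Euler vector field. -/
noncomputable def Et (n : ℕ) : Module.End ℂ (P2 n) :=
  (∑ i : Fin n, M (X (Sum.inl i)) * Dv (Pi.single i 1)) - ∑ k : Fin (n + 1), M (sp k)

/- ### auxiliary lemmas -/

lemma Dv_mul {n : ℕ} (f : Fin n → ℂ) (p q : P2 n) :
    Dv f (p * q) = p * Dv f q + q * Dv f p := by
  simp [Dv, Derivation.leibniz, smul_eq_mul]

lemma Dv_lfp {n : ℕ} (f c : Fin n → ℂ) : Dv f (lfp c) = C (ap f c) := by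
  rw [Dv, lfp, ap, Derivation.coeFn_coe, map_sum, map_sum]
  congr 1
  funext m
  rw [← smul_eq_C_mul, Derivation.map_smul, mkDerivation_X]
  show c m • (C (f m) : P2 n) = C (f m * c m)
  rw [smul_eq_C_mul, ← C_mul, mul_comm]

lemma Dv_sp {n : ℕ} (f : Fin n → ℂ) (j : Fin (n+1)) : Dv f (sp j) = 0 := by
  simp [Dv, sp, mkDerivation_X]

lemma Dv_C {n : ℕ} (f : Fin n → ℂ) (r : ℂ) : Dv f (C r) = 0 := by
  have := (mkDerivation ℂ (fun v : Fin n ⊕ Fin (n+1) =>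
    Sum.casesOn v (fun m => (C (f m) : P2 n)) fun _ => 0) :
    Derivation ℂ (P2 n) (P2 n)).map_algebraMap r
  simpa [algebraMap_eq, Dv] using this

lemma Dv_comm {n : ℕ} (f g : Fin n → ℂ) (p : P2 n) :
    Dv f (Dv g p) = Dv g (Dv f p) := by
  set Df : Derivation ℂ (P2 n) (P2 n) :=
    mkDerivation ℂ (fun v => Sum.casesOn v (fun m => (C (f m) : P2 n)) fun _ => 0) with hDf
  set Dg : Derivation ℂ (P2 n) (P2 n) :=
    mkDerivation ℂ (fun v => Sum.casesOn v (fun m => (C (g m) : P2 n)) fun _ => 0) with hDg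
  have hCf : ∀ r : ℂ, Df (C r) = 0 := fun r => by
    simpa [algebraMap_eq] using Df.map_algebraMap r
  have hCg : ∀ r : ℂ, Dg (C r) = 0 := fun r => by
    simpa [algebraMap_eq] using Dg.map_algebraMap r
  have h : ⁅Df, Dg⁆ = 0 := by
    apply derivation_ext
    intro v
    have hf : Df (X v) = Sum.casesOn v (fun m => (C (f m) : P2 n)) fun _ => 0 := by
      rw [hDf]; exact mkDerivation_X ..
    have hg' : Dg (X v) = Sum.casesOn v (fun m => (C (g m) : P2 n)) fun _ => 0 := by
      rw [hDg]; exact mkDerivation_X ..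
    cases v with
    | inl m => simp [Derivation.commutator_apply, hf, hg', hCf, hCg]
    | inr m => simp [Derivation.commutator_apply, hf, hg']
  have := congrArg (fun D : Derivation ℂ (P2 n) (P2 n) => D p) h
  simp only [Derivation.commutator_apply] at this
  have h2 : Df (Dg p) - Dg (Df p) = 0 := by simpa using this
  show Df (Dg p) = Dg (Df p)
  exact sub_eq_zero.mp h2

lemma generic_unique {n : ℕ} (l : Fin (n + 1) → Fin n → ℂ) (hl : Generic l)
    (k : Fin (n + 1)) (v : Fin n → ℂ) (hv : ∀ t, t ≠ k → ap v (l t) = 0) :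
    v = 0 := by
  set S : Finset (Fin (n + 1)) := Finset.univ.erase k with hS
  have hcard : S.card = n := by
    rw [hS, Finset.card_erase_of_mem (Finset.mem_univ k)]
    simp
  have hli := hl S hcard
  have hcard2 : Fintype.card S = Module.finrank ℂ (Fin n → ℂ) := by
    simp [Fintype.card_coe, hcard]
  rcases Nat.eq_zero_or_pos n with hn | hn
  · subst hn; funext m; exact m.elim0
  have : S.Nonempty := Finset.card_pos.mp (by rw [hcard]; exact hn)
  have : Nonempty S := ⟨⟨this.choose, this.choose_spec⟩⟩
  have hsp := hli.span_eq_top_of_card_eq_finrank hcard2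
  let φ : (Fin n → ℂ) →ₗ[ℂ] ℂ :=
    { toFun := fun w => ∑ m, v m * w m
      map_add' := by intro a b; simp [mul_add, Finset.sum_add_distrib]
      map_smul' := by
        intro c a
        simp only [smul_eq_mul, Pi.smul_apply, RingHom.id_apply, Finset.mul_sum]
        exact Finset.sum_congr rfl fun m _ => by ring }
  have hφ : φ = 0 := by
    apply LinearMap.ext_on hsp
    intro x hx
    obtain ⟨t, rfl⟩ := hx
    have : t.1 ≠ k := Finset.ne_of_mem_erase t.2
    simpa [φ, ap] using hv t.1 this
  funext m
  have := congrArg (fun ψ : (Fin n → ℂ) →ₗ[ℂ] ℂ => ψ (Pi.single m 1)) hφ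
  simpa [φ, Pi.single_apply, mul_ite, Finset.sum_ite_eq'] using this

lemma ap_comb {n : ℕ} (f g h c : Fin n → ℂ) (r : ℂ) :
    ap (fun m => f m - (g m - r * h m)) c = ap f c - (ap g c - r * ap h c) := by
  simp only [ap, sub_mul, Finset.sum_sub_distrib, mul_assoc, ← Finset.mul_sum]

lemma Dv_comb {n : ℕ} (f g h : Fin n → ℂ) (r : ℂ)
    (hfgh : ∀ m, f m = g m - r * h m) (p : P2 n) :
    Dv f p = Dv g p - r • Dv h p := by
  let F : (Fin n ⊕ Fin (n + 1)) → P2 n :=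
    fun v => Sum.casesOn v (fun m => (C (f m) : P2 n)) fun _ => 0
  let G : (Fin n ⊕ Fin (n + 1)) → P2 n :=
    fun v => Sum.casesOn v (fun m => (C (g m) : P2 n)) fun _ => 0
  let H : (Fin n ⊕ Fin (n + 1)) → P2 n :=
    fun v => Sum.casesOn v (fun m => (C (h m) : P2 n)) fun _ => 0
  have hfun : F = G - r • H := by
    funext v
    cases v with
    | inl m =>
      show (C (f m) : P2 n) = C (g m) - r • C (h m)
      rw [hfgh m, map_sub, map_mul, smul_eq_C_mul]
    | inr m => simp [F, G, H]
  have hmk : (mkDerivation ℂ (G - r • H) : Derivation ℂ (P2 n) (P2 n)) =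
      mkDerivation ℂ G - r • mkDerivation ℂ H := by
    apply derivation_ext
    intro v
    rw [mkDerivation_X, Derivation.sub_apply, Derivation.smul_apply,
      mkDerivation_X, mkDerivation_X]
    simp
  show (mkDerivation ℂ F : Derivation ℂ (P2 n) (P2 n)) p = _
  rw [hfun, hmk]
  show (mkDerivation ℂ G : Derivation ℂ (P2 n) (P2 n)) p -
      r • (mkDerivation ℂ H : Derivation ℂ (P2 n) (P2 n)) p = _
  rfl

lemma ap_sub_smul {n : ℕ} (g h c : Fin n → ℂ) (r : ℂ) :
    ap (fun m => g m - r * h m) c = ap g c - r * ap h c := by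
  simp only [ap, sub_mul, Finset.sum_sub_distrib, mul_assoc, ← Finset.mul_sum]

/-- for pairwise distinct `i,j,k`,
`s_j Ũ_{i,k} − s_i Ũ_{j,k} = −l_i U_{i,j} Ũ_{j,k} + l_k U_{j,k} Ũ_{i,j}
 − U_{j,k}(l_k) s_k Ũ_{i,j} − Ũ_{i,k}`. -/
theorem stmt12 (n : ℕ) (l : Fin (n + 1) → Fin n → ℂ) (hl : Generic l)
    (u : Fin (n + 1) → Fin (n + 1) → Fin n → ℂ)
    (hu1 : ∀ a b, a ≠ b → ap (u a b) (l a) = 1)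
    (hu0 : ∀ a b, a ≠ b → ∀ k, k ≠ a → k ≠ b → ap (u a b) (l k) = 0)
    (i j k : Fin (n + 1)) (hij : i ≠ j) (hik : i ≠ k) (hjk : j ≠ k) :
    M (sp j) * Ut l u i k - M (sp i) * Ut l u j k =
      -(M (lfp (l i)) * Dv (u i j) * Ut l u j k) +
        M (lfp (l k)) * Dv (u j k) * Ut l u i j -
          ap (u j k) (l k) • (M (sp k) * Ut l u i j) - Ut l u i k := by
  have h1 : ap (u i j) (l i) = 1 := hu1 i j hij
  have h2 : ap (u j k) (l j) = 1 := hu1 j k hjk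
  have h3 : ap (u i k) (l i) = 1 := hu1 i k hik
  have h4 : ap (u i j) (l k) = 0 := hu0 i j hij k (Ne.symm hik) (Ne.symm hjk)
  have h5 : ap (u j k) (l i) = 0 := hu0 j k hjk i hij hik
  have h6 : ap (u i k) (l j) = 0 := hu0 i k hik j (Ne.symm hij) hjk
  set α := ap (u i j) (l j) with hα
  set β := ap (u j k) (l k) with hβ
  have huik : ∀ m, u i k m = u i j m - α * u j k m := by
    have hz := generic_unique l hl k (fun m => u i k m - (u i j m - α * u j k m)) ?_
    · intro m
      have := congrFun hz m
      simpa [sub_eq_zero] using this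
    · intro t ht
      rw [show (fun m => u i k m - (u i j m - α * u j k m)) =
          (fun m => u i k m - (u i j m - α * u j k m)) from rfl, ap_comb]
      by_cases hti : t = i
      · subst hti; rw [h3, h1, h5]; ring
      by_cases htj : t = j
      · subst htj; rw [h6, ← hα, h2]; ring
      · rw [hu0 i k hik t hti ht, hu0 i j hij t hti htj, hu0 j k hjk t htj ht]
        ring
  have hγ : ap (u i k) (l k) = -(α * β) := by
    rw [funext huik, ap_sub_smul, h4, ← hβ]; ring
  have hDik : ∀ p, Dv (u i k) p = Dv (u i j) p - α • Dv (u j k) p :=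
    Dv_comb _ _ _ _ huik
  apply LinearMap.ext
  intro p
  simp only [Ut, M, LinearMap.sub_apply, LinearMap.add_apply, LinearMap.neg_apply,
    LinearMap.smul_apply, Module.End.mul_apply, LinearMap.mulLeft_apply,
    map_sub, map_smul, Dv_mul, Dv_lfp, Dv_sp, Dv_C, hDik, h1, h2, h3, h4, h5, h6, hγ,
    ← hα, ← hβ, map_one, map_zero, map_neg, map_mul, zero_mul, mul_zero, one_mul,
    mul_one, sub_zero, zero_sub, add_zero, zero_add, smul_eq_C_mul]
  rw [Dv_comm (u i j) (u j k) p]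
  ring
end

section
/- Let i,j,k,m ∈ {1,...,n+1} be pairwise distinct. Then in 𝒟_{ℂ^n}[s_1,...,s_{n+1}]: l_m s_k Ũ_{i,j} − l_j s_i Ũ_{k,m} = −(l_i l_j U_{i,j} − U_{i,j}(l_j) l_i s_j) Ũ_{k,m} + (l_k l_m U_{k,m} − U_{k,m}(l_m) l_k s_m) Ũ_{i,j}. -/
open MvPolynomial

/- ### Auxiliary lemmas -/

lemma commute_M {n : ℕ} (p q : P2 n) : Commute (M p) (M q) := by
  apply LinearMap.ext; intro x
  simp [M, Module.End.mul_apply, mul_left_comm]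

/-- The derivation underlying `Dv`. -/
noncomputable def Dd {n : ℕ} (u : Fin n → ℂ) : Derivation ℂ (P2 n) (P2 n) :=
  mkDerivation ℂ (fun v => Sum.casesOn v (fun m => (C (u m) : P2 n)) fun _ => 0)

lemma Dv_eq {n : ℕ} (u : Fin n → ℂ) : Dv u = (Dd u : Module.End ℂ (P2 n)) := rfl

lemma Dd_lfp {n : ℕ} (v c : Fin n → ℂ) : Dd v (lfp c) = C (ap v c) := by
  unfold Dd lfp ap
  rw [map_sum]
  simp only [← smul_eq_C_mul, Derivation.map_smul, mkDerivation_X]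
  simp only [smul_eq_C_mul, ← C_mul, ← map_sum]
  congr 1
  exact Finset.sum_congr rfl fun m _ => mul_comm _ _

lemma Dd_sp {n : ℕ} (v : Fin n → ℂ) (j : Fin (n + 1)) : Dd v (sp j) = 0 := by
  rw [Dd, sp, mkDerivation_X]

lemma derivation_commute_M {n : ℕ} (D : Derivation ℂ (P2 n) (P2 n)) (p : P2 n) (h : D p = 0) :
    Commute (D : Module.End ℂ (P2 n)) (M p) := by
  apply LinearMap.ext; intro q
  simp only [Module.End.mul_apply, M, LinearMap.mulLeft_apply, Derivation.coeFn_coe]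
  rw [Derivation.leibniz, h, smul_zero, add_zero, smul_eq_mul]

lemma derivation_commute {n : ℕ} (D1 D2 : Derivation ℂ (P2 n) (P2 n)) (h : ⁅D1, D2⁆ = 0) :
    Commute (D1 : Module.End ℂ (P2 n)) (D2 : Module.End ℂ (P2 n)) := by
  apply LinearMap.ext; intro q
  have h' : ⁅D1, D2⁆ q = 0 := by rw [h]; rfl
  rw [Derivation.commutator_apply, sub_eq_zero] at h'
  simpa [Module.End.mul_apply] using h'

lemma commute_Dv_Dv {n : ℕ} (v w : Fin n → ℂ) : Commute (Dv v) (Dv w) := by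
  rw [Dv_eq, Dv_eq]
  apply derivation_commute
  apply derivation_ext
  intro x
  rw [Derivation.commutator_apply]
  rcases x with y | y <;>
    simp [Dd, mkDerivation_X, ← MvPolynomial.algebraMap_eq, Derivation.map_algebraMap]

lemma commute_Dv_lfp {n : ℕ} (v c : Fin n → ℂ) (h : ap v c = 0) :
    Commute (Dv v) (M (lfp c)) := by
  rw [Dv_eq]
  exact derivation_commute_M _ _ (by rw [Dd_lfp, h, map_zero])

lemma commute_Dv_sp {n : ℕ} (v : Fin n → ℂ) (j : Fin (n + 1)) :
    Commute (Dv v) (M (sp j)) := by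
  rw [Dv_eq]
  exact derivation_commute_M _ _ (Dd_sp v j)

lemma commute_right_Ut {n : ℕ} (l : Fin (n + 1) → Fin n → ℂ)
    (u : Fin (n + 1) → Fin (n + 1) → Fin n → ℂ) (k m : Fin (n + 1))
    (X : Module.End ℂ (P2 n)) (hk : Commute X (M (lfp (l k))))
    (hm : Commute X (M (lfp (l m)))) (hD : Commute X (Dv (u k m)))
    (hsk : Commute X (M (sp k))) (hsm : Commute X (M (sp m))) :
    Commute X (Ut l u k m) := by
  unfold Ut
  exact (((hk.mul_right hm).mul_right hD).sub_right (hm.mul_right hsk)).sub_right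
    ((hk.mul_right hsm).smul_right _)

/-- for pairwise distinct `i,j,k,m`,
`l_m s_k Ũ_{i,j} − l_j s_i Ũ_{k,m} = −(l_i l_j U_{i,j} − U_{i,j}(l_j) l_i s_j) Ũ_{k,m}
 + (l_k l_m U_{k,m} − U_{k,m}(l_m) l_k s_m) Ũ_{i,j}`. -/
theorem stmt13 (n : ℕ) (l : Fin (n + 1) → Fin n → ℂ) (hl : Generic l)
    (u : Fin (n + 1) → Fin (n + 1) → Fin n → ℂ)
    (hu1 : ∀ a b, a ≠ b → ap (u a b) (l a) = 1)
    (hu0 : ∀ a b, a ≠ b → ∀ k, k ≠ a → k ≠ b → ap (u a b) (l k) = 0)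
    (i j k m : Fin (n + 1)) (hij : i ≠ j) (hik : i ≠ k) (him : i ≠ m)
    (hjk : j ≠ k) (hjm : j ≠ m) (hkm : k ≠ m) :
    M (lfp (l m)) * M (sp k) * Ut l u i j - M (lfp (l j)) * M (sp i) * Ut l u k m =
      -((M (lfp (l i)) * M (lfp (l j)) * Dv (u i j) -
          ap (u i j) (l j) • (M (lfp (l i)) * M (sp j))) * Ut l u k m) +
        (M (lfp (l k)) * M (lfp (l m)) * Dv (u k m) -
          ap (u k m) (l m) • (M (lfp (l k)) * M (sp m))) * Ut l u i j := by
  -- each atomic factor of `Ũ_{i,j}` commutes with `Ũ_{k,m}`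
  have hli : Commute (M (lfp (l i))) (Ut l u k m) :=
    commute_right_Ut l u k m _ (commute_M _ _) (commute_M _ _)
      ((commute_Dv_lfp (u k m) (l i) (hu0 k m hkm i hik him)).symm)
      (commute_M _ _) (commute_M _ _)
  have hlj : Commute (M (lfp (l j))) (Ut l u k m) :=
    commute_right_Ut l u k m _ (commute_M _ _) (commute_M _ _)
      ((commute_Dv_lfp (u k m) (l j) (hu0 k m hkm j hjk hjm)).symm)
      (commute_M _ _) (commute_M _ _)
  have hDij : Commute (Dv (u i j)) (Ut l u k m) :=
    commute_right_Ut l u k m _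
      (commute_Dv_lfp (u i j) (l k) (hu0 i j hij k hik.symm hjk.symm))
      (commute_Dv_lfp (u i j) (l m) (hu0 i j hij m him.symm hjm.symm))
      (commute_Dv_Dv _ _) (commute_Dv_sp _ _) (commute_Dv_sp _ _)
  have hsi : Commute (M (sp i)) (Ut l u k m) :=
    commute_right_Ut l u k m _ (commute_M _ _) (commute_M _ _)
      ((commute_Dv_sp (u k m) i).symm) (commute_M _ _) (commute_M _ _)
  have hsj : Commute (M (sp j)) (Ut l u k m) :=
    commute_right_Ut l u k m _ (commute_M _ _) (commute_M _ _)
      ((commute_Dv_sp (u k m) j).symm) (commute_M _ _) (commute_M _ _)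
  have c1 : Commute (Ut l u i j) (Ut l u k m) := by
    unfold Ut
    exact (((hli.mul_left hlj).mul_left hDij).sub_left (hlj.mul_left hsi)).sub_left
      ((hli.mul_left hsj).smul_left _)
  have e1 : M (lfp (l i)) * M (lfp (l j)) * Dv (u i j) -
      ap (u i j) (l j) • (M (lfp (l i)) * M (sp j)) =
      Ut l u i j + M (lfp (l j)) * M (sp i) := by
    rw [Ut]; abel
  have e2 : M (lfp (l k)) * M (lfp (l m)) * Dv (u k m) -
      ap (u k m) (l m) • (M (lfp (l k)) * M (sp m)) =
      Ut l u k m + M (lfp (l m)) * M (sp k) := by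
    rw [Ut]; abel
  rw [e1, e2, add_mul, add_mul, neg_add, c1.eq]
  abel
end
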